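/- Assume Hypothesis 7.1 holds for the subset I ⊆ S. Then the coefficient of the monomial (Λ_1 ⋯ Λ_{μ_I})^{(p−1)m} · Π_{k=1}^m Λ_{μ_I+k}^{p−1} in the determinant of the m × m matrix Ā^I(Λ) = [Ā^I_{uv}(Λ)]_{u,v ∈ U^I_min} equals (−1)^{(μ_I+1)m}·((p−1)!)^{−(μ_I+1)m} in 𝔽_p, which is nonzero. -/

import Mathlib

/-!
Writing `uᵣ = a⁺_{μ+κ(r)} + (a⁺₁ + ⋯ + a⁺_μ)` (Hypothesis 7.1), a nonzero contribution to the
coefficient of `Λ^E` in `det Ā` picks, for a permutation `τ` and every column `r`, an exponent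
`νᵣ` of the entry `Ā_{τ(r), r}` with `∑ᵣ νᵣ = E`. The column sums of `E` force `νᵣ` to be `p - 1`
on the first `μ` variables; on the remaining ones they leave a matrix of weights with all row
and column sums `p - 1` such that `p • a⁺_{μ+κ(τ r)}` is `a⁺_{μ+κ(r)}` plus the weighted sum of
the points `a⁺_{μ+k}`. Ordering the points lexicographically and arguing from the largest one
downwards, such a relation can only hold for `τ = 1` and the diagonal weights, so the
coefficient is the product of the diagonal ones, `((-1)^{μ+1} ((p-1)!)^{-(μ+1)})^m`, which is a
unit by Wilson's theorem.
-/

open MvPolynomial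

/-- `a_j⁺ = (a_{0j}, …, a_{nj}, 1) ∈ ℕ^{n+2}`. -/
def aplus {n N : ℕ} (a : Fin N → Fin (n + 1) → ℕ) (j : Fin N) : Fin (n + 2) → ℕ :=
  Fin.snoc (a j) 1

open Finset Function

theorem MvPolynomial.coeff_prod {ι σ R : Type*} [CommSemiring R] [DecidableEq ι] [DecidableEq σ]
    (s : Finset ι) (f : ι → MvPolynomial σ R) (d : σ →₀ ℕ) :
    (∏ i ∈ s, f i).coeff d = ∑ l ∈ s.finsuppAntidiag d, ∏ i ∈ s, (f i).coeff (l i) := by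
  have h := MvPowerSeries.coeff_prod (fun i => (f i : MvPowerSeries σ R)) d s
  simp only [← coeToMvPowerSeries.ringHom_apply, ← map_prod] at h
  simpa only [coeToMvPowerSeries.ringHom_apply, coeff_coe] using h

theorem Matrix.coeff_det_eq_prod_of_unique {ι σ R : Type*} [Fintype ι] [DecidableEq ι]
    [DecidableEq σ] [CommRing R] (M : Matrix ι ι (MvPolynomial σ R)) {E : σ →₀ ℕ}
    {g : ι →₀ σ →₀ ℕ} (hg : g ∈ univ.finsuppAntidiag E)
    (huniq : ∀ τ : Equiv.Perm ι, ∀ l ∈ univ.finsuppAntidiag E,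
      (∀ r, (M (τ r) r).coeff (l r) ≠ 0) → τ = 1 ∧ l = g) :
    M.det.coeff E = ∏ r, (M r r).coeff (g r) := by
  have hvanish : ∀ τ : Equiv.Perm ι, ∀ l ∈ univ.finsuppAntidiag E, ¬(τ = 1 ∧ l = g) →
      ∏ r, (M (τ r) r).coeff (l r) = 0 := fun τ l hl hne => by
    by_contra h
    exact hne (huniq τ l hl fun r hr => h (prod_eq_zero (mem_univ r) hr))
  rw [Matrix.det_apply', MvPolynomial.coeff_sum,
    sum_eq_single 1 (fun τ _ hτ => ?_) (by simp)]
  · rw [← map_intCast (MvPolynomial.C : R →+* MvPolynomial σ R), MvPolynomial.coeff_C_mul,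
      MvPolynomial.coeff_prod,
      sum_eq_single_of_mem g hg (fun l hl hlg => hvanish 1 l hl (by simp [hlg]))]
    simp
  · rw [← map_intCast (MvPolynomial.C : R →+* MvPolynomial σ R), MvPolynomial.coeff_C_mul,
      MvPolynomial.coeff_prod, sum_eq_zero fun l hl => hvanish τ l hl (by simp [hτ]), mul_zero]

theorem Fin.sum_castLE_eq_sum_filter {M : Type*} [AddCommMonoid M] {μ N : ℕ} (h : μ ≤ N)
    (f : Fin N → M) :
    ∑ t : Fin μ, f (Fin.castLE h t) = ∑ j ∈ univ.filter (fun j : Fin N => (j : ℕ) < μ), f j := by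
  refine (sum_map univ (Fin.castLEEmb h) f).symm.trans (congrArg (Finset.sum · f) ?_)
  ext j
  simp only [mem_map, mem_univ, true_and, mem_filter, Fin.coe_castLEEmb]
  exact ⟨fun ⟨t, ht⟩ => ht ▸ t.isLt, fun hj => ⟨⟨j, hj⟩, rfl⟩⟩

theorem mem_range_add_iff {μ m N : ℕ} {κ : Fin m → Fin m} (hκ : Surjective κ)
    (hlt : ∀ r, μ + κ r < N) (j : Fin N) :
    j ∈ Set.range (fun r => (⟨μ + κ r, hlt r⟩ : Fin N)) ↔ μ ≤ j ∧ (j : ℕ) < μ + m := by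
  refine ⟨by rintro ⟨r, rfl⟩; simp, fun ⟨h1, h2⟩ => ?_⟩
  obtain ⟨r, hr⟩ := hκ ⟨j - μ, by omega⟩
  exact ⟨r, Fin.ext (by simp [hr]; omega)⟩

section WeightedPoints

variable {ι J V : Type*} [AddCommMonoid V] [LinearOrder V] [IsOrderedCancelAddMonoid V]

theorem eq_of_add_sum_nsmul_eq_succ_nsmul [Fintype ι] {ν : ι → ℕ} {y : ι → V} {c t : V}
    (h : c + ∑ k, ν k • y k = (∑ k, ν k + 1) • t) (hc : c ≤ t)
    (hy : ∀ k, ν k ≠ 0 → y k ≤ t) :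
    c = t ∧ ∀ k, ν k ≠ 0 → y k = t := by
  have hle : ∀ k ∈ univ, ν k • y k ≤ ν k • t := fun k _ => by
    rcases eq_or_ne (ν k) 0 with hk | hk
    · simp [hk]
    · exact nsmul_le_nsmul_right (hy k hk) _
  rw [succ_nsmul', sum_smul] at h
  have hct : c = t := by
    refine hc.antisymm (not_lt.mp fun hlt => h.not_lt ?_)
    exact add_lt_add_of_lt_of_le hlt (sum_le_sum hle)
  subst hct
  have hterms := (sum_eq_sum_iff_of_le hle).mp (add_left_cancel h)
  refine ⟨rfl, fun k hk => ?_⟩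
  by_contra hne
  exact (nsmul_lt_nsmul_right hk (lt_of_le_of_ne (hy k hk) hne)).ne (hterms k (mem_univ k))

variable [Fintype ι] [DecidableEq ι] [Fintype J] [DecidableEq J] {κ : ι → J} {y : J → V}
  {σ : Equiv.Perm ι} {ν : ι → J → ℕ} {q : ℕ}

/-- If all rows with larger points are diagonal, their columns are used up, so row `σ⁻¹ r` only
uses points `≤ y (κ r)`; a sum of `q + 1` such points equals `(q + 1) • y (κ r)` only if all of
them do. -/
theorem eq_and_eq_single_of_add_sum_nsmul_eq (hy : Injective (y ∘ κ))
    (hsupp : ∀ r j, ν r j ≠ 0 → j ∈ Set.range κ)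
    (hrow : ∀ r, ∑ j, ν r j = q) (hcol : ∀ s, ∑ r, ν r (κ s) = q)
    (heq : ∀ r, y (κ r) + ∑ j, ν r j • y j = (q + 1) • y (κ (σ r))) (r : ι)
    (habove : ∀ s, y (κ r) < y (κ s) → σ s = s ∧ ν s = Pi.single (κ s) q) :
    σ r = r ∧ ν r = Pi.single (κ r) q := by
  obtain ⟨t, rfl⟩ := σ.surjective r
  have hct : y (κ t) ≤ y (κ (σ t)) := by
    by_contra! hlt
    exact hlt.ne (by rw [(habove t hlt).1])
  have hyt : ∀ j, ν t j ≠ 0 → y j ≤ y (κ (σ t)) := by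
    intro j hj
    obtain ⟨s, rfl⟩ := hsupp t j hj
    by_contra! hlt
    obtain ⟨hσs, hνs⟩ := habove s hlt
    have hts : s ≠ t := by
      rintro rfl
      exact hlt.ne (by rw [hσs])
    have := (sum_pair (f := fun r => ν r (κ s)) hts).symm.trans_le
      (sum_le_sum_of_subset (subset_univ {s, t}))
    rw [hcol s, hνs, Pi.single_eq_same] at this
    omega
  have heqt := heq t
  rw [← hrow t] at heqt
  obtain ⟨hyt_eq, hyj⟩ := eq_of_add_sum_nsmul_eq_succ_nsmul heqt hct hyt
  have hσt : σ t = t := (hy hyt_eq).symm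
  have hνt : ∀ j, j ≠ κ t → ν t j = 0 := fun j hj => by
    by_contra h0
    obtain ⟨s, rfl⟩ := hsupp t j h0
    exact hj (congrArg κ (hy ((hyj _ h0).trans (by rw [hσt]; rfl))))
  rw [hσt]
  refine ⟨hσt, funext fun j => ?_⟩
  rcases eq_or_ne j (κ t) with rfl | hj
  · rw [Pi.single_eq_same, ← hrow t, sum_eq_single (κ t) (fun j _ => hνt j) (by simp)]
  · rw [Pi.single_eq_of_ne hj, hνt j hj]

theorem eq_one_and_eq_single_of_add_sum_nsmul_eq (hy : Injective (y ∘ κ))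
    (hsupp : ∀ r j, ν r j ≠ 0 → j ∈ Set.range κ)
    (hrow : ∀ r, ∑ j, ν r j = q) (hcol : ∀ s, ∑ r, ν r (κ s) = q)
    (heq : ∀ r, y (κ r) + ∑ j, ν r j • y j = (q + 1) • y (κ (σ r))) :
    σ = 1 ∧ ∀ r, ν r = Pi.single (κ r) q := by
  suffices hgood : ∀ r, σ r = r ∧ ν r = Pi.single (κ r) q from
    ⟨Equiv.ext fun r => (hgood r).1, fun r => (hgood r).2⟩
  by_contra! hbad
  obtain ⟨r, hr, hmax⟩ := exists_max_image
    (univ.filter fun r => ¬(σ r = r ∧ ν r = Pi.single (κ r) q)) (y ∘ κ)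
    (by simpa [Finset.Nonempty] using hbad)
  refine (mem_filter.mp hr).2 (eq_and_eq_single_of_add_sum_nsmul_eq hy hsupp hrow hcol heq r
    fun s hs => ?_)
  by_contra hs'
  exact not_lt.mpr (hmax s (by simpa using hs')) hs

end WeightedPoints

section Exponents

variable {p n N μ m : ℕ} {a : Fin N → Fin (n + 1) → ℕ}

/-- `w` is one of the exponents `ν` summed over in `Ā_{uv}`. -/
def IsExponent (p : ℕ) (a : Fin N → Fin (n + 1) → ℕ) (u v : Fin (n + 2) → ℕ)
    (w : Fin N →₀ ℕ) : Prop :=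
  (∀ j, w j ≤ p - 1) ∧ ∀ i, ∑ j, (w j : ℤ) * (aplus a j i : ℤ) = p * u i - v i

/-- `a⁺₁ + ⋯ + a⁺_μ`, with the paper's indices shifted down by one. -/
def aplusSum (a : Fin N → Fin (n + 1) → ℕ) (μ : ℕ) : Fin (n + 2) → ℕ :=
  ∑ j ∈ univ.filter (fun j : Fin N => (j : ℕ) < μ), aplus a j

/-- The exponent of `(Λ₁ ⋯ Λ_μ Λₖ)^{p-1}`. -/
noncomputable def diagExponent (p μ : ℕ) {N : ℕ} (k : Fin N) : Fin N →₀ ℕ :=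
  Finsupp.equivFunOnFinite.symm (fun j : Fin N => if (j : ℕ) < μ then p - 1 else 0) +
    Finsupp.single k (p - 1)

theorem isExponent_iff {u v : Fin (n + 2) → ℕ} {w : Fin N →₀ ℕ} :
    IsExponent p a u v w ↔ (∀ j, w j ≤ p - 1) ∧ ∑ j, w j • aplus a j + v = p • u := by
  refine and_congr_right fun _ => funext_iff.trans (forall_congr' fun i => ?_) |>.symm
  simp only [Pi.add_apply, Finset.sum_apply, Pi.smul_apply, smul_eq_mul]
  constructor <;> intro h
  · rw [eq_sub_iff_add_eq]; exact_mod_cast h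
  · rw [eq_sub_iff_add_eq] at h; exact_mod_cast h

theorem sum_smul_aplus_last (w : Fin N → ℕ) :
    (∑ j, w j • aplus a j) (Fin.last (n + 1)) = ∑ j, w j := by
  simp [Finset.sum_apply, aplus]

theorem diagExponent_apply (k j : Fin N) :
    diagExponent p μ k j = (if (j : ℕ) < μ then p - 1 else 0) + if k = j then p - 1 else 0 := by
  rw [diagExponent, Finsupp.add_apply, Finsupp.single_apply]
  rfl

theorem sum_diagExponent_smul_aplus (k : Fin N) :
    ∑ j, diagExponent p μ k j • aplus a j = (p - 1) • aplusSum a μ + (p - 1) • aplus a k := by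
  simp only [diagExponent_apply, add_smul, sum_add_distrib, ite_smul, zero_smul, sum_ite_eq,
    mem_univ, if_true, ← sum_filter, smul_sum, aplusSum]

theorem isExponent_diagExponent (hp : 0 < p) {k : Fin N} (hk : μ ≤ k) :
    IsExponent p a (aplus a k + aplusSum a μ) (aplus a k + aplusSum a μ) (diagExponent p μ k) := by
  refine isExponent_iff.mpr ⟨fun j => ?_, ?_⟩
  · rw [diagExponent_apply]
    split_ifs <;> omega
  · obtain ⟨q, rfl⟩ : ∃ q, p = q + 1 := ⟨p - 1, by omega⟩
    rw [sum_diagExponent_smul_aplus, Nat.add_sub_cancel, succ_nsmul, smul_add]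
    abel

theorem prod_diagExponent {R : Type*} [CommMonoid R] {f : ℕ → R} (hf : f 0 = 1) (hμ : μ ≤ N)
    {k : Fin N} (hk : μ ≤ k) :
    ∏ j, f (diagExponent p μ k j) = f (p - 1) ^ (μ + 1) := by
  have hsplit : ∀ j, f (diagExponent p μ k j) =
      (if (j : ℕ) < μ then f (p - 1) else 1) * if k = j then f (p - 1) else 1 := fun j => by
    rw [diagExponent_apply]
    split_ifs <;> first | omega | simp [hf]
  simp only [hsplit, prod_mul_distrib, prod_ite_eq, mem_univ, if_true, prod_ite, prod_const_one,
    mul_one, prod_const, Fin.card_filter_val_lt, min_eq_right hμ, pow_succ]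

theorem sum_diagExponent_eq {x : Fin m → Fin N} {E : Fin N →₀ ℕ} (hxinj : Injective x)
    (hx : ∀ j : Fin N, j ∈ Set.range x ↔ μ ≤ j ∧ (j : ℕ) < μ + m)
    (hE : ∀ j : Fin N, E j =
      if (j : ℕ) < μ then (p - 1) * m else if (j : ℕ) < μ + m then p - 1 else 0) :
    ∑ r, diagExponent p μ (x r) = E := by
  ext j
  have hsingle : ∑ r, (if x r = j then p - 1 else 0) = if j ∈ Set.range x then p - 1 else 0 := by
    split_ifs with hj
    · obtain ⟨s, rfl⟩ := hj
      simp only [hxinj.eq_iff, sum_ite_eq', mem_univ, if_true]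
    · exact sum_eq_zero fun r _ => if_neg fun h => hj ⟨r, h⟩
  rw [Finsupp.finsetSum_apply, hE]
  simp only [diagExponent_apply, sum_add_distrib, sum_const, card_univ, Fintype.card_fin,
    smul_eq_mul, hsingle, hx]
  split_ifs <;> first | omega | ring

end Exponents

section Uniqueness

variable {p n N μ m q : ℕ} {a : Fin N → Fin (n + 1) → ℕ} {E : Fin N →₀ ℕ}
  {l : Fin m →₀ Fin N →₀ ℕ}

theorem apply_eq_of_lt_of_sum_eq
    (hE : ∀ j : Fin N, E j = if (j : ℕ) < μ then q * m else if (j : ℕ) < μ + m then q else 0)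
    (hl : ∑ r, l r = E) (hle : ∀ r j, l r j ≤ q) (r : Fin m) {j : Fin N} (hj : (j : ℕ) < μ) :
    l r j = q := by
  refine (sum_eq_sum_iff_of_le fun r _ => hle r j).mp ?_ r (mem_univ r)
  simp [← Finsupp.finsetSum_apply, hl, hE, hj, mul_comm]

theorem lt_of_ne_zero_of_sum_eq
    (hE : ∀ j : Fin N, E j = if (j : ℕ) < μ then q * m else if (j : ℕ) < μ + m then q else 0)
    (hl : ∑ r, l r = E) {r : Fin m} {j : Fin N} (hj : l r j ≠ 0) : (j : ℕ) < μ + m := by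
  by_contra h
  have := single_le_sum (fun r _ => Nat.zero_le (l r j)) (mem_univ r)
  rw [← Finsupp.finsetSum_apply, hl, hE, if_neg (by omega), if_neg h] at this
  omega

theorem aplus_add_sum_smul_eq_of_isExponent (hp : 0 < p) {k k' : Fin N} {w : Fin N →₀ ℕ}
    (hw : ∀ j : Fin N, (j : ℕ) < μ → w j = p - 1)
    (h : IsExponent p a (aplus a k' + aplusSum a μ) (aplus a k + aplusSum a μ) w) :
    aplus a k + ∑ j : Fin N, (if (j : ℕ) < μ then 0 else w j) • aplus a j = p • aplus a k' := by
  obtain ⟨q, rfl⟩ : ∃ q, p = q + 1 := ⟨p - 1, by omega⟩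
  have hsplit : ∑ j, w j • aplus a j =
      q • aplusSum a μ + ∑ j : Fin N, (if (j : ℕ) < μ then 0 else w j) • aplus a j := by
    rw [aplusSum, smul_sum, sum_filter, ← sum_add_distrib]
    refine sum_congr rfl fun j _ => ?_
    split_ifs with hj
    · rw [hw j hj, Nat.add_sub_cancel, zero_smul, add_zero]
    · rw [zero_add]
  have heq := (isExponent_iff.mp h).2
  rw [hsplit] at heq
  refine add_right_cancel (b := q • aplusSum a μ + aplusSum a μ) ?_
  calc _ = q • aplusSum a μ + ∑ j : Fin N, (if (j : ℕ) < μ then 0 else w j) • aplus a j +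
        (aplus a k + aplusSum a μ) := by abel
    _ = _ := by rw [heq, smul_add, succ_nsmul, succ_nsmul]

theorem eq_one_and_eq_diagExponent_of_isExponent (hp : 0 < p) {x : Fin m → Fin N}
    (hxinj : Injective (aplus a ∘ x))
    (hx : ∀ j : Fin N, j ∈ Set.range x ↔ μ ≤ j ∧ (j : ℕ) < μ + m)
    (hE : ∀ j : Fin N, E j =
      if (j : ℕ) < μ then (p - 1) * m else if (j : ℕ) < μ + m then p - 1 else 0)
    {τ : Equiv.Perm (Fin m)} (hl : ∑ r, l r = E)
    (hexp : ∀ r, IsExponent p a (aplus a (x (τ r)) + aplusSum a μ)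
      (aplus a (x r) + aplusSum a μ) (l r)) :
    τ = 1 ∧ ∀ r, l r = diagExponent p μ (x r) := by
  have hcommon r {j : Fin N} (hj : (j : ℕ) < μ) : l r j = p - 1 :=
    apply_eq_of_lt_of_sum_eq hE hl (fun r => (hexp r).1) r hj
  set ν : Fin m → Fin N → ℕ := fun r j => if (j : ℕ) < μ then 0 else l r j with hν
  have heq r : aplus a (x r) + ∑ j, ν r j • aplus a j = (p - 1 + 1) • aplus a (x (τ r)) := by
    rw [Nat.sub_add_cancel hp]
    exact aplus_add_sum_smul_eq_of_isExponent hp (fun j => hcommon r) (hexp r)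
  have hrow r : ∑ j, ν r j = p - 1 := by
    have := congrFun (heq r) (Fin.last (n + 1))
    rw [Pi.add_apply, sum_smul_aplus_last, Pi.smul_apply, aplus, Fin.snoc_last, aplus,
      Fin.snoc_last, smul_eq_mul, mul_one] at this
    omega
  have hsupp r j (hj : ν r j ≠ 0) : j ∈ Set.range x := by
    have h : ¬(j : ℕ) < μ := fun h => hj (if_pos h)
    have hlj : l r j ≠ 0 := by simpa only [hν, if_neg h] using hj
    exact (hx j).mpr ⟨not_lt.mp h, lt_of_ne_zero_of_sum_eq hE hl hlj⟩
  have hcol s : ∑ r, ν r (x s) = p - 1 := by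
    obtain ⟨h1, h2⟩ := (hx (x s)).mp ⟨s, rfl⟩
    simp only [hν, if_neg (not_lt.mpr h1), ← Finsupp.finsetSum_apply, hl, hE, if_pos h2]
  -- any linear order on `ℕ^{n+2}` compatible with addition would do
  have heqLex r : toLex (aplus a (x r)) + ∑ j, ν r j • toLex (aplus a j) =
      (p - 1 + 1) • toLex (aplus a (x (τ r))) := heq r
  obtain ⟨hτ, hνr⟩ := eq_one_and_eq_single_of_add_sum_nsmul_eq (y := fun j => toLex (aplus a j))
    hxinj hsupp hrow hcol heqLex
  refine ⟨hτ, fun r => Finsupp.ext fun j => ?_⟩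
  have hνrj := congrFun (hνr r) j
  rw [diagExponent_apply]
  by_cases hj : (j : ℕ) < μ
  · have hxr : x r ≠ j := fun h => by have := ((hx _).mp ⟨r, rfl⟩).1; omega
    rw [if_pos hj, hcommon r hj, if_neg hxr, add_zero]
  · simp only [hν, if_neg hj, Pi.single_apply, eq_comm (a := j)] at hνrj
    rw [if_neg hj, zero_add, hνrj]

end Uniqueness

/-- `U^I_min` is enumerated by `umin`, Hypothesis 7.1 is encoded by `κ` and `hκ`, and `M` is
`Ā^I(Λ)`. -/
theorem stmt_14 (p n N : ℕ) (hp : p.Prime)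
    (a : Fin N → Fin (n + 1) → ℕ)
    (μ m : ℕ)
    (umin : Fin m → Fin (n + 2) → ℕ)
    (huinj : Function.Injective umin)
    (hNm : μ + m ≤ N)
    (κ : Fin m → Fin m)
    (hκ : ∀ r : Fin m, ∀ i : Fin (n + 2),
      umin r i = aplus a ⟨μ + (κ r : ℕ), by have := (κ r).isLt; omega⟩ i +
        ∑ t : Fin μ, aplus a ⟨(t : ℕ), by have := t.isLt; omega⟩ i)
    (M : Matrix (Fin m) (Fin m) (MvPolynomial (Fin N) (ZMod p)))
    (hM : ∀ r c : Fin m, ∀ m' : Fin N →₀ ℕ, (M r c).coeff m' =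
      if (∀ j, m' j ≤ p - 1) ∧
          (∀ i : Fin (n + 2), ∑ j, (m' j : ℤ) * (aplus a j i : ℤ) = p * umin r i - umin c i)
      then (-1) ^ (μ + 1) * (∏ j, ((m' j).factorial : ZMod p))⁻¹
      else 0)
    (E : Fin N →₀ ℕ)
    (hE : ∀ j : Fin N, E j =
      if (j : ℕ) < μ then (p - 1) * m else if (j : ℕ) < μ + m then p - 1 else 0) :
    M.det.coeff E = (-1) ^ ((μ + 1) * m) * (((p - 1).factorial : ZMod p))⁻¹ ^ ((μ + 1) * m) ∧
    M.det.coeff E ≠ 0 := by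
  have : Fact p.Prime := ⟨hp⟩
  have hlt r : μ + κ r < N := by have := (κ r).isLt; omega
  set x : Fin m → Fin N := fun r => ⟨μ + κ r, hlt r⟩
  have hu r : umin r = aplus a (x r) + aplusSum a μ := funext fun i => by
    rw [hκ r i, Pi.add_apply, aplusSum, Finset.sum_apply,
      ← Fin.sum_castLE_eq_sum_filter (by omega : μ ≤ N) fun j => aplus a j i]
    rfl
  have hxinj : Injective (aplus a ∘ x) := fun r s h =>
    huinj (by rw [hu, hu, show aplus a (x r) = aplus a (x s) from h])
  have hx := mem_range_add_iff (Finite.injective_iff_surjective.mp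
    fun r s h => hxinj (by simp only [comp_apply, x, h])) hlt
  set g : Fin m →₀ Fin N →₀ ℕ := Finsupp.equivFunOnFinite.symm fun r => diagExponent p μ (x r)
  have hg : g ∈ univ.finsuppAntidiag E :=
    mem_finsuppAntidiag.mpr ⟨sum_diagExponent_eq hxinj.of_comp hx hE, subset_univ _⟩
  have hexp {r c : Fin m} {w : Fin N →₀ ℕ} (hw : (M r c).coeff w ≠ 0) :
      IsExponent p a (umin r) (umin c) w := not_not.mp fun h => hw (by rw [hM]; exact if_neg h)
  have hdet := M.coeff_det_eq_prod_of_unique hg fun τ l hl hne => by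
    obtain ⟨hτ, hl⟩ := eq_one_and_eq_diagExponent_of_isExponent hp.pos hxinj hx hE
      (mem_finsuppAntidiag.mp hl).1 fun r => hu r ▸ hu (τ r) ▸ hexp (hne r)
    exact ⟨hτ, Finsupp.ext hl⟩
  have hdiag r : (M r r).coeff (g r) =
      (-1) ^ (μ + 1) * (((p - 1).factorial : ZMod p))⁻¹ ^ (μ + 1) := by
    have hxr : μ ≤ x r := Nat.le_add_right _ _
    rw [show g r = diagExponent p μ (x r) from rfl, hM,
      if_pos (hu r ▸ isExponent_diagExponent hp.pos hxr),
      prod_diagExponent (f := fun k => (k.factorial : ZMod p)) (by simp) (by omega) hxr, inv_pow]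
  have hval : M.det.coeff E =
      (-1) ^ ((μ + 1) * m) * (((p - 1).factorial : ZMod p))⁻¹ ^ ((μ + 1) * m) := by
    rw [hdet, prod_congr rfl fun r _ => hdiag r, prod_const, card_univ, Fintype.card_fin,
      mul_pow, pow_mul, pow_mul]
  refine ⟨hval, ?_⟩
  rw [hval, ZMod.wilsons_lemma, inv_neg, inv_one, ← mul_pow]
  simp
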